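/- arXiv:2505.15059 — 3 statements merged into one kernel-verified Lean document; each statement's English description precedes it below -/
import Mathlib

section
/- Let M̄ be the projected chain on [L]×[n] defined by: M̄((i,j),(i,j')) = (1−λ) ∫_{X⁰} (p_{(i,j)}(x)/P_{(i,j)}(X⁰)) · p_i(j'|x) dx for j ≠ j', M̄((i,j),(i',j)) = (λ/2) ∫_{X⁰} (p_{(i,j)}(x)/P_{(i,j)}(X⁰)) · min{ r_{i'} w_{(i',j)} p_{(i',j)}(x) / (r_i w_{(i,j)} p_{(i,j)}(x)), 1 } dx for i' = i±1 in [L], and M̄((i,j),(i,j)) = 1 − ∑_{(k,l)≠(i,j)} M̄((i,j),(k,l)), where p_i(j|x) = w_{(i,j)} p_{(i,j)}(x) / p_i(x). Then the stationary distribution of M̄ is P̄(i,j) = r_i w_{(i,j)} P_{(i,j)}(X⁰) / P([L]×X⁰), i.e., P̄ satisfies the detailed balance condition P̄(i,j) M̄((i,j),(i',j')) = P̄(i',j') M̄((i',j'),(i,j)) for all (i,j),(i',j') ∈ [L]×[n]. -/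
/-!
Multiplying the `(a, b)` entry of `M̄` by `P̄(a)` cancels the normalisation `P_a(X⁰)` and turns
the entry into an integral over `X⁰` of a quantity symmetric in `a` and `b`: within a level it is
`r_i w_{(i,j)} p_{(i,j)} · w_{(i,j')} p_{(i,j')} / p_i`, and between adjacent levels the
Metropolis ratio becomes `min (r_{i'} w_{(i',j)} p_{(i',j)}) (r_i w_{(i,j)} p_{(i,j)})`.
The diagonal entries play no role in detailed balance.
-/

open MeasureTheory Finset

noncomputable section

/-- Adjacency of temperature levels: `i' = i ± 1`. -/
def adjacent {L : ℕ} (i i' : Fin L) : Prop :=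
  (i' : ℕ) = (i : ℕ) + 1 ∨ (i : ℕ) = (i' : ℕ) + 1

instance {L : ℕ} (i i' : Fin L) : Decidable (adjacent i i') := by
  unfold adjacent; infer_instance

theorem mul_min_div_one {α : Type*} [Field α] [LinearOrder α] [IsStrictOrderedRing α]
    {c d : α} (hc : 0 ≤ c) (hd : 0 ≤ d) : c * min (d / c) 1 = min d c := by
  rcases hc.eq_or_lt with rfl | hc
  · simp [min_eq_right hd]
  · rw [mul_min_of_nonneg _ _ hc.le, mul_div_cancel₀ _ hc.ne', mul_one]

theorem mul_div_mul_integral_div_mul {X : Type*} [MeasurableSpace X] (μ : Measure X)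
    {P : ℝ} (hP : P ≠ 0) (c θ k : ℝ) (f g : X → ℝ) :
    c * P / θ * (k * ∫ x, f x / P * g x ∂μ) = k / θ * ∫ x, c * f x * g x ∂μ := by
  have hfg : ∫ x, f x / P * g x ∂μ = (∫ x, f x * g x ∂μ) / P := by
    rw [← integral_div]; congr 1 with x; ring
  have hcfg : ∫ x, c * f x * g x ∂μ = c * ∫ x, f x * g x ∂μ := by
    rw [← integral_const_mul]; congr 1 with x; ring
  rw [hfg, hcfg]
  field_simp

theorem detailedBalance_of_offDiag {α β : Type*} [Mul β] {π : α → β} {M Moff : α → α → β}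
    (hM : ∀ a b, a ≠ b → M a b = Moff a b)
    (hMoff : ∀ a b, a ≠ b → π a * Moff a b = π b * Moff b a) (a b : α) :
    π a * M a b = π b * M b a := by
  rcases eq_or_ne a b with rfl | hab
  · rfl
  · rw [hM a b hab, hM b a hab.symm, hMoff a b hab]

theorem adjacent_comm {L : ℕ} {i i' : Fin L} : adjacent i i' ↔ adjacent i' i := by
  unfold adjacent; tauto

theorem stmt0_general {X : Type*} [MeasurableSpace X] (ν : Measure X)
    (L n : ℕ)
    (lam : ℝ)
    (r : Fin L → ℝ) (hr : ∀ i, 0 < r i)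
    (w : Fin L → Fin n → ℝ) (hw : ∀ i j, 0 ≤ w i j)
    -- component densities
    (pc : Fin L → Fin n → X → ℝ)
    (hpc0 : ∀ i j x, 0 ≤ pc i j x)
    (X0 : Set X)
    (hpos : ∀ i j, 0 < ∫ x in X0, pc i j x ∂ν)
    -- mixture densities
    (p : Fin L → X → ℝ)
    -- `P_{(i,j)}(X⁰)`
    (PijX0 : Fin L → Fin n → ℝ) (hPij : ∀ i j, PijX0 i j = ∫ x in X0, pc i j x ∂ν)
    -- `θ = P([L] × X⁰)`
    (θ : ℝ)
    -- off-diagonal entries of the projected chain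
    (Moff : Fin L × Fin n → Fin L × Fin n → ℝ)
    (hMoff : ∀ a b, Moff a b =
      if a.1 = b.1 ∧ a.2 ≠ b.2 then
        (1 - lam) * ∫ x in X0, (pc a.1 a.2 x / PijX0 a.1 a.2) *
          (w a.1 b.2 * pc a.1 b.2 x / p a.1 x) ∂ν
      else if adjacent a.1 b.1 ∧ a.2 = b.2 then
        (lam / 2) * ∫ x in X0, (pc a.1 a.2 x / PijX0 a.1 a.2) *
          min ((r b.1 * w b.1 a.2 * pc b.1 a.2 x) / (r a.1 * w a.1 a.2 * pc a.1 a.2 x)) 1 ∂ν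
      else 0)
    -- the projected chain, with diagonal entries making rows sum to one
    (Mbar : Fin L × Fin n → Fin L × Fin n → ℝ)
    (hMbar : ∀ a b, Mbar a b =
      if a = b then 1 - ∑ c ∈ Finset.univ.erase a, Moff a c else Moff a b)
    -- the claimed stationary distribution
    (Pbar : Fin L × Fin n → ℝ)
    (hPbar : ∀ a, Pbar a = r a.1 * w a.1 a.2 * PijX0 a.1 a.2 / θ) :
    ∀ a b : Fin L × Fin n, Pbar a * Mbar a b = Pbar b * Mbar b a := by
  have hP : ∀ i j, PijX0 i j ≠ 0 := fun i j => (hPij i j ▸ hpos i j).ne'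
  have hweight : ∀ i j x, 0 ≤ r i * w i j * pc i j x := fun i j x =>
    mul_nonneg (mul_nonneg (hr i).le (hw i j)) (hpc0 i j x)
  refine detailedBalance_of_offDiag (fun a b hab => by rw [hMbar, if_neg hab]) ?_
  rintro ⟨i, j⟩ ⟨i', j'⟩ -
  simp only [hMoff, hPbar]
  by_cases hwithin : i = i' ∧ j ≠ j'
  · obtain ⟨rfl, hjj⟩ := hwithin
    rw [if_pos ⟨rfl, hjj⟩, if_pos ⟨rfl, hjj.symm⟩, mul_div_mul_integral_div_mul _ (hP i j),
      mul_div_mul_integral_div_mul _ (hP i j')]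
    congr 2 with x
    ring
  have hwithin' : ¬(i' = i ∧ j' ≠ j) := fun h => hwithin ⟨h.1.symm, Ne.symm h.2⟩
  rw [if_neg hwithin, if_neg hwithin']
  by_cases hadj : adjacent i i' ∧ j = j'
  · obtain ⟨hadj, rfl⟩ := hadj
    rw [if_pos ⟨hadj, rfl⟩, if_pos ⟨adjacent_comm.mp hadj, rfl⟩,
      mul_div_mul_integral_div_mul _ (hP i j), mul_div_mul_integral_div_mul _ (hP i' j)]
    congr 2 with x
    rw [mul_min_div_one (hweight i j x) (hweight i' j x),
      mul_min_div_one (hweight i' j x) (hweight i j x), min_comm]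
  · have hadj' : ¬(adjacent i' i ∧ j' = j) := fun h => hadj ⟨adjacent_comm.mp h.1, h.2.symm⟩
    rw [if_neg hadj, if_neg hadj', mul_zero, mul_zero]

theorem stmt0 {X : Type*} [MeasurableSpace X] (ν : Measure X)
    (L n : ℕ) (hL : 2 ≤ L) (hn : 0 < n)
    (lam : ℝ) (hlam : lam ∈ Set.Ioo (0 : ℝ) 1)
    (r : Fin L → ℝ) (hr : ∀ i, 0 < r i) (hr1 : ∑ i, r i = 1)
    (w : Fin L → Fin n → ℝ) (hw : ∀ i j, 0 ≤ w i j) (hw1 : ∀ i, ∑ j, w i j = 1)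
    -- component densities
    (pc : Fin L → Fin n → X → ℝ)
    (hpc0 : ∀ i j x, 0 ≤ pc i j x) (hpcm : ∀ i j, Measurable (pc i j))
    (hpc1 : ∀ i j, ∫ x, pc i j x ∂ν = 1)
    (X0 : Set X) (hX0 : MeasurableSet X0)
    (hpos : ∀ i j, 0 < ∫ x in X0, pc i j x ∂ν)
    -- mixture densities
    (p : Fin L → X → ℝ) (hp : ∀ i x, p i x = ∑ j, w i j * pc i j x)
    -- `P_{(i,j)}(X⁰)`
    (PijX0 : Fin L → Fin n → ℝ) (hPij : ∀ i j, PijX0 i j = ∫ x in X0, pc i j x ∂ν)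
    -- `θ = P([L] × X⁰)`
    (θ : ℝ) (hθ : θ = ∑ i, r i * ∫ x in X0, p i x ∂ν)
    -- off-diagonal entries of the projected chain
    (Moff : Fin L × Fin n → Fin L × Fin n → ℝ)
    (hMoff : ∀ a b, Moff a b =
      if a.1 = b.1 ∧ a.2 ≠ b.2 then
        (1 - lam) * ∫ x in X0, (pc a.1 a.2 x / PijX0 a.1 a.2) *
          (w a.1 b.2 * pc a.1 b.2 x / p a.1 x) ∂ν
      else if adjacent a.1 b.1 ∧ a.2 = b.2 then
        (lam / 2) * ∫ x in X0, (pc a.1 a.2 x / PijX0 a.1 a.2) *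
          min ((r b.1 * w b.1 a.2 * pc b.1 a.2 x) / (r a.1 * w a.1 a.2 * pc a.1 a.2 x)) 1 ∂ν
      else 0)
    -- the projected chain, with diagonal entries making rows sum to one
    (Mbar : Fin L × Fin n → Fin L × Fin n → ℝ)
    (hMbar : ∀ a b, Mbar a b =
      if a = b then 1 - ∑ c ∈ Finset.univ.erase a, Moff a c else Moff a b)
    -- the claimed stationary distribution
    (Pbar : Fin L × Fin n → ℝ)
    (hPbar : ∀ a, Pbar a = r a.1 * w a.1 a.2 * PijX0 a.1 a.2 / θ) :
    ∀ a b : Fin L × Fin n, Pbar a * Mbar a b = Pbar b * Mbar b a :=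
  stmt0_general ν L n lam r hr w hw pc hpc0 X0 hpos p PijX0 hPij θ Moff hMoff Mbar hMbar Pbar hPbar
end
end

section
/- The ([L]×X⁰)-restricted Dirichlet form of the simulated tempering chain M satisfies E_{[L]×X⁰}(g,g) = (1−λ) ∑_{i=1}^L r_i E_{i,X⁰}(g_i,g_i) + λ E^I_{X⁰}(g,g) for every g ∈ L²([L]×X, P), where g_i(x) = g(i,x), E_{i,X⁰} is the X⁰-restricted Dirichlet form of the kernel M_i with respect to its stationary density p_i, and E^I_{X⁰}(g,g) = (1/4) ∑_{i,i'∈[L]: i'=i±1} ∫_{X⁰} (g(i,x) − g(i',x))² r_i p_i(x) min{ r_{i'} p_{i'}(x)/(r_i p_i(x)), 1 } dx. -/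
open MeasureTheory

noncomputable section

/-- The `S`-restricted Dirichlet form of a Markov kernel `K` with stationary measure `Pi`:
`(1/2) ∫_S ∫_S (g(b) - g(a))² Pi(da) K(a, db)`. -/
def restDirichlet {Ω : Type*} [MeasurableSpace Ω] (Pi : Measure Ω) (K : Ω → Measure Ω)
    (S : Set Ω) (g : Ω → ℝ) : ℝ :=
  (1 / 2) * ∫ a in S, (∫ b in S, (g b - g a) ^ 2 ∂(K a)) ∂Pi

/-- The stationary measure of the simulated tempering chain: density `p(i,x) = rᵢ pᵢ(x)`. -/
def stStat {X : Type*} [MeasurableSpace X] (ν : Measure X) {L : ℕ}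
    (r : Fin L → ℝ) (p : Fin L → X → ℝ) : Measure (Fin L × X) :=
  Measure.sum fun i =>
    ENNReal.ofReal (r i) • ((ν.withDensity fun x => ENNReal.ofReal (p i x)).map fun x => (i, x))

/-- Acceptance probability for a temperature swap. -/
def stAccept {X : Type*} {L : ℕ} (r : Fin L → ℝ) (p : Fin L → X → ℝ)
    (i i' : Fin L) (x : X) : ℝ :=
  min ((r i' * p i' x) / (r i * p i x)) 1

/-- The simulated tempering Markov kernel on `[L] × X`. -/
def stKernel {X : Type*} [MeasurableSpace X] {L : ℕ} (lam : ℝ) (r : Fin L → ℝ)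
    (p : Fin L → X → ℝ) (Mi : Fin L → X → Measure X) :
    Fin L × X → Measure (Fin L × X) := fun q =>
  ENNReal.ofReal (1 - lam) • ((Mi q.1 q.2).map fun y => (q.1, y))
    + ∑ i' : Fin L,
        (if adjacent q.1 i' then ENNReal.ofReal (lam / 2 * stAccept r p q.1 i' q.2) else 0) •
          Measure.dirac (i', q.2)
    + ENNReal.ofReal
        (lam - ∑ i' : Fin L, if adjacent q.1 i' then lam / 2 * stAccept r p q.1 i' q.2 else 0) •
        Measure.dirac q

/-- The subset `[L] × X⁰` of the extended state space. -/
def levelSet {X : Type*} (L : ℕ) (X0 : Set X) : Set (Fin L × X) := {q | q.2 ∈ X0}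

/-- `Pi` is a stationary measure of the kernel `K`. -/
def IsStationaryKer {Ω : Type*} [MeasurableSpace Ω] (K : Ω → Measure Ω) (Pi : Measure Ω) : Prop :=
  ∀ A : Set Ω, MeasurableSet A → ∫⁻ x, K x A ∂Pi = Pi A

/-!
At a point `(i, x)` with `x ∈ X⁰` the kernel `stKernel` is a mixture of the level move `Mᵢ`, the
swaps to the neighbouring levels `i'` (point masses at `(i', x)` of weight `λ/2 · αᵢᵢ'(x)`) and a
rejection atom at `(i, x)`, which does not see `(g b - g (i, x))²`. Integrating this pointwise
identity against `P = ∑ rᵢ pᵢ` on `[L] × X⁰` level by level gives the formula, provided every piece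
is integrable. For the level move this holds because stationarity makes both marginals of
`pᵢ ⊗ Mᵢ` equal to `pᵢ`, so `(g (i, y) - g (i, x))²` is integrable there when `gᵢ ∈ L²(pᵢ)`; for
the swaps because `rᵢ pᵢ αᵢᵢ' ≤ min (rᵢ pᵢ) (rᵢ' pᵢ')`, so `gᵢ` and `gᵢ'` are both square
integrable against `pᵢ αᵢᵢ'`.
-/

open ProbabilityTheory
open scoped ENNReal

section StationaryKernel

variable {X : Type*} [MeasurableSpace X] {μ : Measure X}

lemma IsStationaryKer.comp_eq {K : X → Measure X} (hK : Measurable K)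
    (h : IsStationaryKer K μ) : (⟨K, hK⟩ : Kernel X X) ∘ₘ μ = μ :=
  Measure.ext fun A hA => by
    rw [Measure.bind_apply hA (Kernel.aemeasurable _)]
    exact h A hA

variable [SFinite μ] {κ : Kernel X X} [IsMarkovKernel κ] {f : X → ℝ}

lemma integrable_sq_sub_compProd (hκμ : κ ∘ₘ μ = μ) (hf : MemLp f 2 μ) :
    Integrable (fun z : X × X => (f z.2 - f z.1) ^ 2) (μ ⊗ₘ κ) := by
  have hfst : MeasurePreserving Prod.fst (μ ⊗ₘ κ) μ :=
    ⟨measurable_fst, by rw [← Measure.fst, Measure.fst_compProd]⟩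
  have hsnd : MeasurePreserving Prod.snd (μ ⊗ₘ κ) μ :=
    ⟨measurable_snd, by rw [← Measure.snd, Measure.snd_compProd, hκμ]⟩
  exact ((hf.comp_measurePreserving hsnd).sub (hf.comp_measurePreserving hfst)).integrable_sq

lemma ae_integrable_sq_sub (hκμ : κ ∘ₘ μ = μ) (hf : MemLp f 2 μ) :
    ∀ᵐ x ∂μ, Integrable (fun y => (f y - f x) ^ 2) (κ x) :=
  let h := integrable_sq_sub_compProd hκμ hf
  ((Measure.integrable_compProd_iff h.1).1 h).1

lemma integrable_setIntegral_sq_sub (hκμ : κ ∘ₘ μ = μ) (hf : MemLp f 2 μ)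
    {S : Set X} (hS : MeasurableSet S) :
    Integrable (fun x => ∫ y in S, (f y - f x) ^ 2 ∂κ x) μ := by
  have h := (integrable_sq_sub_compProd hκμ hf).indicator (MeasurableSet.univ.prod hS)
  refine ((Measure.integrable_compProd_iff h.1).1 h).2.congr (ae_of_all _ fun x => ?_)
  dsimp only
  rw [← integral_indicator hS]
  congr 1 with y
  by_cases hy : y ∈ S <;> simp [hy, Set.indicator]

end StationaryKernel

section Acceptance

variable {X : Type*} {L : ℕ} {r : Fin L → ℝ} {p : Fin L → X → ℝ} {i i' : Fin L} {x : X}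

lemma stAccept_nonneg (h : 0 ≤ r i * p i x) (h' : 0 ≤ r i' * p i' x) :
    0 ≤ stAccept r p i i' x :=
  le_min (div_nonneg h' h) zero_le_one

lemma stAccept_le_one : stAccept r p i i' x ≤ 1 := min_le_right _ _

lemma mul_stAccept_le (h : 0 ≤ r i * p i x) (h' : 0 ≤ r i' * p i' x) :
    r i * p i x * stAccept r p i i' x ≤ r i' * p i' x := by
  rcases h.eq_or_lt with h0 | hpos
  · rw [← h0, zero_mul]; exact h'
  · calc r i * p i x * stAccept r p i i' x
        ≤ r i * p i x * ((r i' * p i' x) / (r i * p i x)) :=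
          mul_le_mul_of_nonneg_left (min_le_left _ _) h
      _ = r i' * p i' x := mul_div_cancel₀ _ hpos.ne'

end Acceptance

section Dirac

variable {Ω : Type*} [MeasurableSpace Ω] {S : Set Ω} {f : Ω → ℝ} {a : Ω}

lemma integrableOn_smul_dirac (hf : Measurable f) {c : ℝ≥0∞} (hc : c ≠ ∞) :
    IntegrableOn f S (c • Measure.dirac a) :=
  ((integrable_dirac' hf.stronglyMeasurable enorm_lt_top).smul_measure hc).integrableOn

lemma setIntegral_smul_dirac (hS : MeasurableSet S) (hf : Measurable f) (ha : a ∈ S)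
    (c : ℝ≥0∞) : ∫ b in S, f b ∂(c • Measure.dirac a) = c.toReal * f a := by
  classical
  rw [Measure.restrict_smul, integral_smul_measure, setIntegral_dirac' hf.stronglyMeasurable _ hS,
    if_pos ha, smul_eq_mul]

end Dirac

section TemperingChain

variable {X : Type*} [MeasurableSpace X] {ν : Measure X} {L : ℕ} {r : Fin L → ℝ}
  {p : Fin L → X → ℝ} {X0 : Set X}

lemma measurableSet_levelSet (hX0 : MeasurableSet X0) : MeasurableSet (levelSet L X0) :=
  hX0.preimage measurable_snd

lemma restrict_levelSet_stStat (hX0 : MeasurableSet X0) :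
    (stStat ν r p).restrict (levelSet L X0) = ∑ i, ENNReal.ofReal (r i) •
      (((ν.withDensity fun x => ENNReal.ofReal (p i x)).restrict X0).map (Prod.mk i)) := by
  rw [stStat, Measure.restrict_sum _ (measurableSet_levelSet hX0), Measure.sum_fintype]
  refine Finset.sum_congr rfl fun i _ => ?_
  rw [Measure.restrict_smul,
    Measure.restrict_map measurable_prodMk_left (measurableSet_levelSet hX0)]
  rfl

lemma setIntegral_levelSet_stStat (hr : ∀ i, 0 ≤ r i) (hX0 : MeasurableSet X0)
    {F : Fin L × X → ℝ}
    (hF : ∀ i, IntegrableOn (fun x => F (i, x)) X0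
      (ν.withDensity fun x => ENNReal.ofReal (p i x))) :
    ∫ a in levelSet L X0, F a ∂(stStat ν r p) =
      ∑ i, r i * ∫ x in X0, F (i, x) ∂(ν.withDensity fun x => ENNReal.ofReal (p i x)) := by
  rw [restrict_levelSet_stStat hX0, integral_finsetSum_measure fun i _ =>
    ((measurableEmbedding_prodMk_left i).integrable_map_iff.2 (hF i)).smul_measure
      ENNReal.ofReal_ne_top]
  refine Finset.sum_congr rfl fun i _ => ?_
  rw [integral_smul_measure, ENNReal.toReal_ofReal (hr i),
    (measurableEmbedding_prodMk_left i).integral_map, smul_eq_mul]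

lemma memLp_level_of_memLp_stStat {g : Fin L × X → ℝ} {q : ℝ≥0∞} (hg : MemLp g q (stStat ν r p))
    {i : Fin L} (hri : 0 < r i) :
    MemLp (fun x => g (i, x)) q (ν.withDensity fun x => ENNReal.ofReal (p i x)) := by
  set m := (ν.withDensity fun x => ENNReal.ofReal (p i x)).map (Prod.mk i)
  have hr0 : ENNReal.ofReal (r i) ≠ 0 := ENNReal.ofReal_pos.2 hri |>.ne'
  have hle : m ≤ (ENNReal.ofReal (r i))⁻¹ • stStat ν r p := by
    calc m = (ENNReal.ofReal (r i))⁻¹ • ENNReal.ofReal (r i) • m := by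
          rw [smul_smul, ENNReal.inv_mul_cancel hr0 ENNReal.ofReal_ne_top, one_smul]
      _ ≤ (ENNReal.ofReal (r i))⁻¹ • stStat ν r p := by gcongr; exact Measure.le_sum _ i
  exact (measurableEmbedding_prodMk_left i).memLp_map_measure_iff.1
    (hg.of_measure_le_smul (ENNReal.inv_ne_top.2 hr0) hle)

lemma setIntegral_levelSet_stKernel {lam : ℝ} (hlam : lam ∈ Set.Icc (0 : ℝ) 1)
    {Mi : Fin L → X → Measure X} {i : Fin L} {x : X}
    (hacc : ∀ i', 0 ≤ stAccept r p i i' x) (hX0 : MeasurableSet X0) (hx : x ∈ X0)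
    {f : Fin L × X → ℝ} (hf : Measurable f) (hfx : f (i, x) = 0)
    (hfi : IntegrableOn (fun y => f (i, y)) X0 (Mi i x)) :
    ∫ b in levelSet L X0, f b ∂(stKernel lam r p Mi (i, x)) =
      (1 - lam) * ∫ y in X0, f (i, y) ∂(Mi i x) +
        ∑ i', if adjacent i i' then lam / 2 * stAccept r p i i' x * f (i', x) else 0 := by
  have hS := measurableSet_levelSet (L := L) hX0
  have hdirac : ∀ (c : ℝ) (b : Fin L × X),
      IntegrableOn f (levelSet L X0) (ENNReal.ofReal c • Measure.dirac b) :=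
    fun _ _ => integrableOn_smul_dirac hf ENNReal.ofReal_ne_top
  have hcoef : ∀ i', (if adjacent i i' then ENNReal.ofReal (lam / 2 * stAccept r p i i' x) else 0)
      = ENNReal.ofReal (if adjacent i i' then lam / 2 * stAccept r p i i' x else 0) := by
    intro i'
    split_ifs <;> simp
  have hres : ∀ m : Fin L → Measure (Fin L × X),
      (∑ i', m i').restrict (levelSet L X0) = ∑ i', (m i').restrict (levelSet L X0) := fun m => by
    simpa only [Measure.restrictₗ_apply] using map_sum (Measure.restrictₗ (levelSet L X0)) m _
  have hmove : IntegrableOn f (levelSet L X0)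
      (ENNReal.ofReal (1 - lam) • (Mi i x).map fun y => (i, y)) := by
    rw [IntegrableOn, Measure.restrict_smul]
    exact ((measurableEmbedding_prodMk_left i).integrableOn_map_iff.2 hfi).smul_measure
      ENNReal.ofReal_ne_top
  have hswap : IntegrableOn f (levelSet L X0) (∑ i', ENNReal.ofReal
      (if adjacent i i' then lam / 2 * stAccept r p i i' x else 0) • Measure.dirac (i', x)) := by
    rw [IntegrableOn, hres]
    exact integrable_finsetSum_measure.2 fun i' _ => hdirac _ _
  have hmem : ∀ i', ((i', x) : Fin L × X) ∈ levelSet L X0 := fun _ => hx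
  simp only [stKernel, hcoef]
  rw [Measure.restrict_add, Measure.restrict_add,
    integral_add_measure (Integrable.add_measure hmove hswap) (hdirac _ _),
    integral_add_measure hmove hswap, hres,
    integral_finsetSum_measure fun i' _ => hdirac _ _, setIntegral_smul_dirac hS hf (hmem i), hfx,
    mul_zero, add_zero, Measure.restrict_smul, integral_smul_measure,
    ENNReal.toReal_ofReal (by linarith [hlam.2]),
    (measurableEmbedding_prodMk_left i).setIntegral_map, smul_eq_mul]
  congr 1
  refine Finset.sum_congr rfl fun i' _ => ?_
  rw [setIntegral_smul_dirac hS hf (hmem i')]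
  split_ifs
  · rw [ENNReal.toReal_ofReal (mul_nonneg (by linarith [hlam.1]) (hacc i'))]
  · simp

end TemperingChain

section WithDensity

variable {X : Type*} [MeasurableSpace X] {ν : Measure X} {q : X → ℝ}

lemma isProbabilityMeasure_withDensity_ofReal (hq : ∀ x, 0 ≤ q x) (hq1 : ∫ x, q x ∂ν = 1) :
    IsProbabilityMeasure (ν.withDensity fun x => ENNReal.ofReal (q x)) := ⟨by
  rw [withDensity_apply _ MeasurableSet.univ, Measure.restrict_univ,
    ← ofReal_integral_eq_lintegral_ofReal (integrable_of_integral_eq_one hq1) (ae_of_all _ hq),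
    hq1, ENNReal.ofReal_one]⟩

lemma integrable_withDensity_ofReal_iff (hqm : Measurable q) (hq : ∀ x, 0 ≤ q x) {h : X → ℝ} :
    Integrable h (ν.withDensity fun x => ENNReal.ofReal (q x)) ↔
      Integrable (fun x => q x * h x) ν := by
  rw [integrable_withDensity_iff_integrable_smul' hqm.ennreal_ofReal
    (ae_of_all _ fun _ => ENNReal.ofReal_lt_top)]
  simp only [ENNReal.toReal_ofReal (hq _), smul_eq_mul]

lemma setIntegral_withDensity_ofReal (hqm : Measurable q) (hq : ∀ x, 0 ≤ q x) (h : X → ℝ)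
    {s : Set X} (hs : MeasurableSet s) :
    ∫ x in s, h x ∂(ν.withDensity fun x => ENNReal.ofReal (q x)) = ∫ x in s, q x * h x ∂ν := by
  rw [setIntegral_withDensity_eq_setIntegral_toReal_smul hqm.ennreal_ofReal
    (ae_of_all _ fun _ => ENNReal.ofReal_lt_top) h hs]
  simp only [ENNReal.toReal_ofReal (hq _), smul_eq_mul]

end WithDensity

section Swap

variable {X : Type*} [MeasurableSpace X] {ν : Measure X} {L : ℕ} {r : Fin L → ℝ}
  {p : Fin L → X → ℝ} {i i' : Fin L}

lemma measurable_stAccept (hpm : ∀ j, Measurable (p j)) : Measurable (stAccept r p i i') :=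
  (((hpm i').const_mul _).div ((hpm i).const_mul _)).min measurable_const

lemma withDensity_stAccept_le (hri : 0 < r i) (hri' : 0 ≤ r i') (hp : ∀ j x, 0 ≤ p j x)
    (hpm : ∀ j, Measurable (p j)) :
    ν.withDensity (fun x => ENNReal.ofReal (p i x * stAccept r p i i' x)) ≤
      ENNReal.ofReal (r i' / r i) • ν.withDensity fun x => ENNReal.ofReal (p i' x) := by
  rw [← withDensity_smul _ (hpm i').ennreal_ofReal]
  refine withDensity_mono (ae_of_all _ fun x => ?_)
  rw [Pi.smul_apply, smul_eq_mul, ← ENNReal.ofReal_mul (div_nonneg hri' hri.le)]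
  refine ENNReal.ofReal_le_ofReal ?_
  rw [div_mul_eq_mul_div, le_div_iff₀ hri, mul_comm, ← mul_assoc]
  exact mul_stAccept_le (mul_nonneg hri.le (hp i x)) (mul_nonneg hri' (hp i' x))

lemma integrable_stAccept_mul_sq_sub (hri : 0 < r i) (hri' : 0 ≤ r i') (hp : ∀ j x, 0 ≤ p j x)
    (hpm : ∀ j, Measurable (p j)) {u v : X → ℝ}
    (hu : MemLp u 2 (ν.withDensity fun x => ENNReal.ofReal (p i x)))
    (hv : MemLp v 2 (ν.withDensity fun x => ENNReal.ofReal (p i' x))) :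
    Integrable (fun x => stAccept r p i i' x * (v x - u x) ^ 2)
      (ν.withDensity fun x => ENNReal.ofReal (p i x)) := by
  have hacc : ∀ x, 0 ≤ stAccept r p i i' x := fun x =>
    stAccept_nonneg (mul_nonneg hri.le (hp i x)) (mul_nonneg hri' (hp i' x))
  have hflow_le : ν.withDensity (fun x => ENNReal.ofReal (p i x * stAccept r p i i' x)) ≤
      ν.withDensity fun x => ENNReal.ofReal (p i x) :=
    withDensity_mono (ae_of_all _ fun x => ENNReal.ofReal_le_ofReal
      (mul_le_of_le_one_right (hp i x) stAccept_le_one))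
  have hsq := ((hv.of_measure_le_smul ENNReal.ofReal_ne_top
    (withDensity_stAccept_le hri hri' hp hpm)).sub (hu.mono_measure hflow_le)).integrable_sq
  rw [integrable_withDensity_ofReal_iff (q := fun x => p i x * stAccept r p i i' x)
    ((hpm i).mul (measurable_stAccept hpm))
    fun x => mul_nonneg (hp i x) (hacc x)] at hsq
  rw [integrable_withDensity_ofReal_iff (hpm i) (hp i)]
  simpa only [Pi.sub_apply, mul_assoc] using hsq

lemma mul_setIntegral_stAccept_mul_sq_sub (hpm : Measurable (p i)) (hp : ∀ x, 0 ≤ p i x)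
    (u v : X → ℝ) {s : Set X} (hs : MeasurableSet s) :
    r i * ∫ x in s, stAccept r p i i' x * (v x - u x) ^ 2
        ∂(ν.withDensity fun x => ENNReal.ofReal (p i x)) =
      ∫ x in s, (u x - v x) ^ 2 * (r i * p i x) * stAccept r p i i' x ∂ν := by
  rw [setIntegral_withDensity_ofReal hpm hp _ hs, ← integral_const_mul]
  congr 1 with x
  ring

end Swap

section Levels

variable {X : Type*} [MeasurableSpace X] {ν : Measure X} {L : ℕ} {r : Fin L → ℝ}
  {p : Fin L → X → ℝ} {X0 : Set X} {lam : ℝ} {Mi : Fin L → X → Measure X} {i : Fin L}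
  {g : Fin L × X → ℝ}

lemma ae_setIntegral_stKernel_sq_sub {μ : Measure X} [SFinite μ]
    (hlam : lam ∈ Set.Icc (0 : ℝ) 1) (hMim : Measurable (Mi i))
    [∀ x, IsProbabilityMeasure (Mi i x)] (hstat : IsStationaryKer (Mi i) μ)
    (hacc : ∀ i' x, 0 ≤ stAccept r p i i' x) (hX0 : MeasurableSet X0) (hgm : Measurable g)
    (hgi : MemLp (fun x => g (i, x)) 2 μ) :
    (fun x => ∫ b in levelSet L X0, (g b - g (i, x)) ^ 2 ∂(stKernel lam r p Mi (i, x)))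
      =ᵐ[μ.restrict X0] fun x =>
        (1 - lam) * ∫ y in X0, (g (i, y) - g (i, x)) ^ 2 ∂(Mi i x) +
          ∑ i', if adjacent i i' then
            lam / 2 * (stAccept r p i i' x * (g (i', x) - g (i, x)) ^ 2) else 0 := by
  have : IsMarkovKernel (⟨Mi i, hMim⟩ : Kernel X X) := ⟨inferInstance⟩
  refine (ae_restrict_iff' hX0).2 ?_
  filter_upwards [ae_integrable_sq_sub (hstat.comp_eq hMim) hgi] with x hint hx
  rw [setIntegral_levelSet_stKernel hlam (hacc · x) hX0 hx ((hgm.sub_const _).pow_const 2)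
    (by simp) hint.integrableOn]
  simp only [mul_assoc]

lemma integrableOn_and_mul_setIntegral_stKernel_level (hlam : lam ∈ Set.Icc (0 : ℝ) 1)
    (hMim : Measurable (Mi i)) [∀ x, IsProbabilityMeasure (Mi i x)]
    [IsFiniteMeasure (ν.withDensity fun x => ENNReal.ofReal (p i x))]
    (hstat : IsStationaryKer (Mi i) (ν.withDensity fun x => ENNReal.ofReal (p i x)))
    (hr : ∀ j, 0 < r j) (hp : ∀ j x, 0 ≤ p j x) (hpm : ∀ j, Measurable (p j))
    (hX0 : MeasurableSet X0) (hgm : Measurable g)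
    (hgl : ∀ j, MemLp (fun x => g (j, x)) 2 (ν.withDensity fun x => ENNReal.ofReal (p j x))) :
    IntegrableOn (fun x => ∫ b in levelSet L X0, (g b - g (i, x)) ^ 2 ∂(stKernel lam r p Mi (i, x)))
        X0 (ν.withDensity fun x => ENNReal.ofReal (p i x)) ∧
      r i * ∫ x in X0, ∫ b in levelSet L X0, (g b - g (i, x)) ^ 2 ∂(stKernel lam r p Mi (i, x))
          ∂(ν.withDensity fun x => ENNReal.ofReal (p i x)) =
        2 * (1 - lam) * (r i * restDirichlet (ν.withDensity fun x => ENNReal.ofReal (p i x))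
            (Mi i) X0 fun x => g (i, x)) +
          lam / 2 * ∑ i', if adjacent i i' then
            ∫ x in X0, (g (i, x) - g (i', x)) ^ 2 * (r i * p i x) * stAccept r p i i' x ∂ν
          else 0 := by
  have : IsMarkovKernel (⟨Mi i, hMim⟩ : Kernel X X) := ⟨inferInstance⟩
  have hF := ae_setIntegral_stKernel_sq_sub hlam hMim hstat
    (fun i' x => stAccept_nonneg (mul_nonneg (hr i).le (hp i x)) (mul_nonneg (hr i').le (hp i' x)))
    hX0 hgm (hgl i)
  have hA : Integrable (fun x => ∫ y in X0, (g (i, y) - g (i, x)) ^ 2 ∂(Mi i x))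
      (ν.withDensity fun x => ENNReal.ofReal (p i x)) :=
    integrable_setIntegral_sq_sub (hstat.comp_eq hMim) (hgl i) hX0
  have hterm : ∀ i', Integrable (fun x => if adjacent i i' then
      lam / 2 * (stAccept r p i i' x * (g (i', x) - g (i, x)) ^ 2) else 0)
      (ν.withDensity fun x => ENNReal.ofReal (p i x)) := fun i' => by
    split_ifs
    exacts [(integrable_stAccept_mul_sq_sub (hr i) (hr i').le hp hpm (hgl i) (hgl i')).const_mul _,
      integrable_zero _ _ _]
  have hswap := integrable_finsetSum Finset.univ fun i' _ => hterm i'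
  refine ⟨((hA.const_mul _).add hswap).integrableOn.congr_fun_ae hF.symm, ?_⟩
  rw [integral_congr_ae hF, integral_add (hA.const_mul _).integrableOn hswap.integrableOn,
    integral_const_mul, integral_finsetSum _ fun i' _ => (hterm i').integrableOn, restDirichlet,
    mul_add, Finset.mul_sum, Finset.mul_sum]
  congr 1
  · ring
  refine Finset.sum_congr rfl fun i' _ => ?_
  split_ifs
  · rw [integral_const_mul, ← mul_setIntegral_stAccept_mul_sq_sub (hpm i) (hp i) _ _ hX0]
    ring
  · simp

end Levels

theorem stmt1_general {X : Type*} [MeasurableSpace X] (ν : Measure X)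
    (L : ℕ)
    (lam : ℝ) (hlam : lam ∈ Set.Ioo (0 : ℝ) 1)
    (r : Fin L → ℝ) (hr : ∀ i, 0 < r i)
    (p : Fin L → X → ℝ)
    (hp0 : ∀ i x, 0 ≤ p i x) (hpm : ∀ i, Measurable (p i)) (hp1 : ∀ i, ∫ x, p i x ∂ν = 1)
    (Mi : Fin L → X → Measure X)
    (hMim : ∀ i, Measurable (Mi i))
    (hMiprob : ∀ i x, IsProbabilityMeasure (Mi i x))
    (hMistat : ∀ i, IsStationaryKer (Mi i) (ν.withDensity fun x => ENNReal.ofReal (p i x)))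
    (X0 : Set X) (hX0 : MeasurableSet X0)
    (g : Fin L × X → ℝ) (hgm : Measurable g) (hg : MemLp g 2 (stStat ν r p)) :
    restDirichlet (stStat ν r p) (stKernel lam r p Mi) (levelSet L X0) g
      = (1 - lam) * ∑ i, r i *
          restDirichlet (ν.withDensity fun x => ENNReal.ofReal (p i x)) (Mi i) X0
            (fun x => g (i, x))
        + lam * ((1 / 4) * ∑ i : Fin L, ∑ i' : Fin L,
            if adjacent i i' then
              ∫ x in X0, (g (i, x) - g (i', x)) ^ 2 * (r i * p i x) * stAccept r p i i' x ∂ν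
            else 0) := by
  have := fun i => isProbabilityMeasure_withDensity_ofReal (ν := ν) (hp0 i) (hp1 i)
  have hlevel := fun i => integrableOn_and_mul_setIntegral_stKernel_level ⟨hlam.1.le, hlam.2.le⟩
    (hMim i) (hMistat i) hr hp0 hpm hX0 hgm fun j => memLp_level_of_memLp_stStat hg (hr j)
  rw [restDirichlet, setIntegral_levelSet_stStat (fun i => (hr i).le) hX0 fun i => (hlevel i).1,
    Finset.sum_congr rfl fun i _ => (hlevel i).2, Finset.sum_add_distrib, ← Finset.mul_sum,
    ← Finset.mul_sum]
  ring

theorem stmt1 {X : Type*} [MeasurableSpace X] (ν : Measure X)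
    (L : ℕ) (hL : 2 ≤ L)
    (lam : ℝ) (hlam : lam ∈ Set.Ioo (0 : ℝ) 1)
    (r : Fin L → ℝ) (hr : ∀ i, 0 < r i) (hr1 : ∑ i, r i = 1)
    (p : Fin L → X → ℝ)
    (hp0 : ∀ i x, 0 ≤ p i x) (hpm : ∀ i, Measurable (p i)) (hp1 : ∀ i, ∫ x, p i x ∂ν = 1)
    (Mi : Fin L → X → Measure X)
    (hMim : ∀ i, Measurable (Mi i))
    (hMiprob : ∀ i x, IsProbabilityMeasure (Mi i x))
    (hMistat : ∀ i, IsStationaryKer (Mi i) (ν.withDensity fun x => ENNReal.ofReal (p i x)))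
    (X0 : Set X) (hX0 : MeasurableSet X0)
    (g : Fin L × X → ℝ) (hgm : Measurable g) (hg : MemLp g 2 (stStat ν r p)) :
    restDirichlet (stStat ν r p) (stKernel lam r p Mi) (levelSet L X0) g
      = (1 - lam) * ∑ i, r i *
          restDirichlet (ν.withDensity fun x => ENNReal.ofReal (p i x)) (Mi i) X0
            (fun x => g (i, x))
        + lam * ((1 / 4) * ∑ i : Fin L, ∑ i' : Fin L,
            if adjacent i i' then
              ∫ x in X0, (g (i, x) - g (i', x)) ^ 2 * (r i * p i x) * stAccept r p i i' x ∂ν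
            else 0) :=
  stmt1_general ν L lam hlam r hr p hp0 hpm hp1 Mi hMim hMiprob hMistat X0 hX0 g hgm hg
end
end

section
/- Let 0 < β ≤ 1 and let w₁,…,w_n > 0 with ∑_{i=1}^n w_i = 1. Let π₁,…,π_n be probability densities and define the normalized densities π(x) ∝ (∑_{i=1}^n w_i π_i(x))^β and π̃(x) ∝ ∑_{i=1}^n w_i π_i(x)^β. Then for all x, w_min · π̃(x) ≤ π(x) ≤ (1/w_min) · π̃(x), where w_min = min_{1≤i≤n} w_i. -/
/-!
Write `f = (∑ wᵢ πᵢ) ^ β` and `g = ∑ wᵢ πᵢ ^ β`. Jensen's inequality for the concave map `t ↦ t ^ β`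
gives `g ≤ f`, while subadditivity of `t ↦ t ^ β` and `wᵢ ^ β ≤ 1 ≤ wᵢ / w_min` give
`f ≤ g / w_min`. Integrating, the normalizing constants satisfy `Zt ≤ Z ≤ Zt / w_min`, and the two
pointwise bounds divided by these constants are the claim.
-/

open MeasureTheory

namespace Real

variable {ι : Type*} {s : Finset ι} {p : ℝ}

lemma rpow_sum_le_sum_rpow {f : ι → ℝ} (hf : ∀ i ∈ s, 0 ≤ f i) (hp : 0 < p) (hp1 : p ≤ 1) :
    (∑ i ∈ s, f i) ^ p ≤ ∑ i ∈ s, f i ^ p := by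
  classical
  induction s using Finset.induction_on with
  | empty => simp [zero_rpow hp.ne']
  | insert a s ha ih =>
    rw [Finset.sum_insert ha, Finset.sum_insert ha]
    have hs : ∀ i ∈ s, 0 ≤ f i := fun i hi => hf i (Finset.mem_insert_of_mem hi)
    calc (f a + ∑ i ∈ s, f i) ^ p ≤ f a ^ p + (∑ i ∈ s, f i) ^ p :=
          rpow_add_le_add_rpow (hf a (Finset.mem_insert_self a s)) (Finset.sum_nonneg hs) hp.le hp1
      _ ≤ f a ^ p + ∑ i ∈ s, f i ^ p := by gcongr; exact ih hs

variable {w a : ι → ℝ}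

lemma sum_mul_rpow_le_rpow_sum_mul (hw : ∀ i ∈ s, 0 ≤ w i) (hw1 : ∑ i ∈ s, w i = 1)
    (ha : ∀ i ∈ s, 0 ≤ a i) (hp0 : 0 ≤ p) (hp1 : p ≤ 1) :
    ∑ i ∈ s, w i * a i ^ p ≤ (∑ i ∈ s, w i * a i) ^ p :=
  (concaveOn_rpow hp0 hp1).le_map_sum hw hw1 ha

lemma rpow_sum_mul_le_sum_mul_rpow_div {m : ℝ} (hm : 0 < m) (hmw : ∀ i ∈ s, m ≤ w i)
    (hw1 : ∀ i ∈ s, w i ≤ 1) (ha : ∀ i ∈ s, 0 ≤ a i) (hp : 0 < p) (hp1 : p ≤ 1) :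
    (∑ i ∈ s, w i * a i) ^ p ≤ (∑ i ∈ s, w i * a i ^ p) / m := by
  have hw : ∀ i ∈ s, 0 ≤ w i := fun i hi => hm.le.trans (hmw i hi)
  calc (∑ i ∈ s, w i * a i) ^ p
      ≤ ∑ i ∈ s, (w i * a i) ^ p :=
        rpow_sum_le_sum_rpow (fun i hi => mul_nonneg (hw i hi) (ha i hi)) hp hp1
    _ = ∑ i ∈ s, w i ^ p * a i ^ p :=
        Finset.sum_congr rfl fun i hi => mul_rpow (hw i hi) (ha i hi)
    _ ≤ ∑ i ∈ s, w i / m * a i ^ p := by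
        refine Finset.sum_le_sum fun i hi => ?_
        have hwp : w i ^ p ≤ w i / m :=
          calc w i ^ p ≤ 1 := rpow_le_one (hw i hi) (hw1 i hi) hp.le
            _ ≤ w i / m := (one_le_div hm).2 (hmw i hi)
        exact mul_le_mul_of_nonneg_right hwp (rpow_nonneg (ha i hi) p)
    _ = (∑ i ∈ s, w i * a i ^ p) / m := by
        rw [Finset.sum_div]
        exact Finset.sum_congr rfl fun i _ => div_mul_eq_mul_div _ _ _

end Real

lemma div_le_and_le_div_of_le_of_le {c F G Z Zt : ℝ} (hc : 0 < c) (hG : 0 ≤ G) (hGF : G ≤ F)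
    (hFG : F ≤ G / c) (hZt : 0 < Zt) (hZtZ : Zt ≤ Z) (hZZt : Z ≤ Zt / c) :
    c * (G / Zt) ≤ F / Z ∧ F / Z ≤ 1 / c * (G / Zt) := by
  have hZ : 0 < Z := hZt.trans_le hZtZ
  constructor
  · calc c * (G / Zt) = G / (Zt / c) := by field_simp
      _ ≤ G / Z := div_le_div_of_nonneg_left hG hZ hZZt
      _ ≤ F / Z := div_le_div_of_nonneg_right hGF hZ.le
  · calc F / Z ≤ G / c / Z := div_le_div_of_nonneg_right hFG hZ.le
      _ ≤ G / c / Zt := div_le_div_of_nonneg_left (div_nonneg hG hc.le) hZt hZtZ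
      _ = 1 / c * (G / Zt) := by ring

lemma mul_div_integral_le_and_le_div_mul_div_integral {α : Type*} [MeasurableSpace α]
    {μ : Measure α} {f g : α → ℝ} {c : ℝ} (hc : 0 < c) (hg : ∀ x, 0 ≤ g x)
    (hgf : ∀ x, g x ≤ f x) (hfg : ∀ x, f x ≤ g x / c)
    (hf_int : 0 < ∫ x, f x ∂μ) (hg_int : 0 < ∫ x, g x ∂μ) (x : α) :
    c * (g x / ∫ y, g y ∂μ) ≤ f x / ∫ y, f y ∂μ ∧
      f x / ∫ y, f y ∂μ ≤ 1 / c * (g x / ∫ y, g y ∂μ) := by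
  have hfi : Integrable f μ := .of_integral_ne_zero hf_int.ne'
  have hgi : Integrable g μ := .of_integral_ne_zero hg_int.ne'
  refine div_le_and_le_div_of_le_of_le hc (hg x) (hgf x) (hfg x) hg_int
    (integral_mono hgi hfi hgf) ?_
  rw [← integral_div]
  exact integral_mono hfi (hgi.div_const c) hfg

theorem stmt7_general (d n : ℕ)
    (β : ℝ) (hβ0 : 0 < β) (hβ1 : β ≤ 1)
    (w : Fin n → ℝ) (hw : ∀ i, 0 < w i) (hw1 : ∑ i, w i = 1)
    (π : Fin n → (Fin d → ℝ) → ℝ)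
    (hπ0 : ∀ i x, 0 ≤ π i x)
    (Z Zt : ℝ)
    (hZ : Z = ∫ x, (∑ i, w i * π i x) ^ β)
    (hZt : Zt = ∫ x, ∑ i, w i * π i x ^ β)
    (hZpos : 0 < Z) (hZtpos : 0 < Zt) :
    ∀ x, (⨅ i, w i) * ((∑ i, w i * π i x ^ β) / Zt) ≤ (∑ i, w i * π i x) ^ β / Z ∧
      (∑ i, w i * π i x) ^ β / Z ≤ (1 / ⨅ i, w i) * ((∑ i, w i * π i x ^ β) / Zt) := by
  subst hZ hZt
  have : Nonempty (Fin n) := Finset.univ_nonempty_iff.mp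
    (Finset.nonempty_of_sum_ne_zero (hw1 ▸ one_ne_zero))
  have hmin_le : ∀ i, ⨅ j, w j ≤ w i := ciInf_le (Finite.bddBelow_range w)
  have hmin_pos : 0 < ⨅ i, w i := by
    obtain ⟨j, hj⟩ := Finite.exists_min w
    exact (hw j).trans_le (le_ciInf hj)
  have hw_le_one : ∀ i, w i ≤ 1 := fun i =>
    hw1 ▸ Finset.single_le_sum (fun j _ => (hw j).le) (Finset.mem_univ i)
  exact mul_div_integral_le_and_le_div_mul_div_integral hmin_pos
    (fun x => Finset.sum_nonneg fun i _ => mul_nonneg (hw i).le (Real.rpow_nonneg (hπ0 i x) β))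
    (fun x => Real.sum_mul_rpow_le_rpow_sum_mul (fun i _ => (hw i).le) hw1
      (fun i _ => hπ0 i x) hβ0.le hβ1)
    (fun x => Real.rpow_sum_mul_le_sum_mul_rpow_div hmin_pos (fun i _ => hmin_le i)
      (fun i _ => hw_le_one i) (fun i _ => hπ0 i x) hβ0 hβ1)
    hZpos hZtpos

theorem stmt7 (d n : ℕ) (hn : 0 < n)
    (β : ℝ) (hβ0 : 0 < β) (hβ1 : β ≤ 1)
    (w : Fin n → ℝ) (hw : ∀ i, 0 < w i) (hw1 : ∑ i, w i = 1)
    (π : Fin n → (Fin d → ℝ) → ℝ)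
    (hπ0 : ∀ i x, 0 ≤ π i x) (hπm : ∀ i, Measurable (π i))
    (hπ1 : ∀ i, ∫ x, π i x = 1)
    (Z Zt : ℝ)
    (hZ : Z = ∫ x, (∑ i, w i * π i x) ^ β)
    (hZt : Zt = ∫ x, ∑ i, w i * π i x ^ β)
    (hZpos : 0 < Z) (hZtpos : 0 < Zt) :
    ∀ x, (⨅ i, w i) * ((∑ i, w i * π i x ^ β) / Zt) ≤ (∑ i, w i * π i x) ^ β / Z ∧
      (∑ i, w i * π i x) ^ β / Z ≤ (1 / ⨅ i, w i) * ((∑ i, w i * π i x ^ β) / Zt) :=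
  stmt7_general d n β hβ0 hβ1 w hw hw1 π hπ0 Z Zt hZ hZt hZpos hZtpos
end
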